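/- Let H be a Banach space, T > 2, and suppose a sequence of operators satisfies the representation Φ_N = A_N + ∑_{k=0}^{N-1} W_k B_N^k where ‖A_N‖ ≤ C₀/((N+1)·ln²(N+e)), ‖W_k‖ ≤ C₁/((k+1)·ln²(k+1+e)), and ‖B_N^k‖ ≤ C₂/((N-k)·ln²(N-k+e)). Then ‖Φ_N‖ ≤ C₃/((N+1)·ln²(N+e)) for a constant C₃ depending only on C₀, C₁, C₂. -/

import Mathlib

/-!
Write `w x = x log²(x + e)`. In the `k`-th term of the convolution one of `k + 1` and `N - k`
is at least half of their sum `N + 1`, and `w` is doubling (`w (2x) ≤ 8 w x`), so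
`1 / (w a w b) ≤ 8 / w (a + b) · (1 / w a + 1 / w b)`. This reduces the convolution to the
series `∑ 1 / w (k + 1)`, which is bounded by `1 + e` because its terms are dominated by the
telescoping differences `(1 + e) (1 / log (k + e) - 1 / log (k + 1 + e))`.
-/

open Real Finset

noncomputable def logSqWeight (x : ℝ) : ℝ := x * log (x + exp 1) ^ 2

lemma one_le_log_add_exp_one {x : ℝ} (hx : 0 ≤ x) : 1 ≤ log (x + exp 1) := by
  rw [le_log_iff_exp_le (by positivity)]
  linarith

lemma logSqWeight_pos {x : ℝ} (hx : 0 < x) : 0 < logSqWeight x := by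
  have := one_le_log_add_exp_one hx.le
  unfold logSqWeight
  positivity

/-- `y + e ≤ 2x + e ≤ (x + e)²`, so the logarithm at most doubles. -/
lemma logSqWeight_le_eight_mul {x y : ℝ} (hy : 0 ≤ y) (hyx : y ≤ 2 * x) :
    logSqWeight y ≤ 8 * logSqWeight x := by
  have hx : 0 ≤ x := by linarith
  have he : 1 < exp 1 := one_lt_exp_iff.mpr one_pos
  have hsq : y + exp 1 ≤ (x + exp 1) ^ 2 := by nlinarith
  have hlog : log (y + exp 1) ≤ 2 * log (x + exp 1) :=
    calc log (y + exp 1) ≤ log ((x + exp 1) ^ 2) := log_le_log (by positivity) hsq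
      _ = 2 * log (x + exp 1) := by rw [log_pow]; norm_num
  have hly := one_le_log_add_exp_one hy
  have hlog_sq : log (y + exp 1) ^ 2 ≤ 4 * log (x + exp 1) ^ 2 := by nlinarith
  unfold logSqWeight
  nlinarith [mul_le_mul hyx hlog_sq (by positivity) (by positivity)]

lemma inv_logSqWeight_mul_inv_le {a b : ℝ} (ha : 0 < a) (hb : 0 < b) :
    (logSqWeight a)⁻¹ * (logSqWeight b)⁻¹ ≤
      8 * (logSqWeight (a + b))⁻¹ * ((logSqWeight a)⁻¹ + (logSqWeight b)⁻¹) := by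
  wlog hba : b ≤ a generalizing a b
  · have := this hb ha (by linarith)
    rw [add_comm b, add_comm (logSqWeight b)⁻¹] at this
    linarith
  have hwa := logSqWeight_pos ha
  have hwb := inv_pos.mpr (logSqWeight_pos hb)
  have hwab := logSqWeight_pos (add_pos ha hb)
  have hwa_inv : (logSqWeight a)⁻¹ ≤ 8 * (logSqWeight (a + b))⁻¹ := by
    rw [← div_eq_mul_inv, inv_le_comm₀ hwa (by positivity), inv_div, div_le_iff₀ (by norm_num)]
    linarith [logSqWeight_le_eight_mul (x := a) (y := a + b) (by positivity) (by linarith)]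
  nlinarith [inv_pos.mpr hwa]

lemma inv_logSqWeight_add_one_le {x : ℝ} (hx : 0 ≤ x) :
    (logSqWeight (x + 1))⁻¹ ≤ (1 + exp 1) * ((log (x + exp 1))⁻¹ - (log (x + 1 + exp 1))⁻¹) := by
  set a := log (x + exp 1)
  set b := log (x + 1 + exp 1)
  have ha : 1 ≤ a := one_le_log_add_exp_one hx
  have hab : a ≤ b := log_le_log (by positivity) (by linarith)
  have hgap : (x + 1 + exp 1)⁻¹ ≤ b - a := by
    have := one_sub_inv_le_log_of_pos (x := (x + 1 + exp 1) / (x + exp 1)) (by positivity)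
    rw [log_div (by positivity) (by positivity), inv_div] at this
    calc (x + 1 + exp 1)⁻¹ = 1 - (x + exp 1) / (x + 1 + exp 1) := by field_simp; ring
      _ ≤ b - a := this
  have hlin : x + 1 + exp 1 ≤ (1 + exp 1) * (x + 1) := by nlinarith [exp_pos 1]
  calc (logSqWeight (x + 1))⁻¹ = (1 + exp 1) * (((1 + exp 1) * (x + 1))⁻¹ / b ^ 2) := by
        show ((x + 1) * b ^ 2)⁻¹ = _; field_simp
    _ ≤ (1 + exp 1) * ((x + 1 + exp 1)⁻¹ / b ^ 2) := by gcongr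
    _ ≤ (1 + exp 1) * ((b - a) / (a * b)) := by gcongr <;> nlinarith
    _ = (1 + exp 1) * (a⁻¹ - b⁻¹) := by
        rw [inv_sub_inv (by linarith : 0 < a).ne' (by linarith : 0 < b).ne']

lemma sum_inv_logSqWeight_le (N : ℕ) :
    ∑ k ∈ range N, (logSqWeight ((k : ℝ) + 1))⁻¹ ≤ 1 + exp 1 := by
  have hN := one_le_log_add_exp_one (Nat.cast_nonneg (α := ℝ) N)
  calc ∑ k ∈ range N, (logSqWeight ((k : ℝ) + 1))⁻¹
      ≤ ∑ k ∈ range N, (1 + exp 1) *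
          ((log ((k : ℝ) + exp 1))⁻¹ - (log (((k + 1 : ℕ) : ℝ) + exp 1))⁻¹) := by
        gcongr with k
        push_cast
        exact inv_logSqWeight_add_one_le k.cast_nonneg
    _ = (1 + exp 1) * (1 - (log ((N : ℝ) + exp 1))⁻¹) := by
        rw [← mul_sum, sum_range_sub' (fun k : ℕ ↦ (log ((k : ℝ) + exp 1))⁻¹)]
        simp
    _ ≤ 1 + exp 1 := by
        have : 0 ≤ (log ((N : ℝ) + exp 1))⁻¹ := by positivity
        nlinarith [exp_pos 1]

lemma sum_inv_logSqWeight_mul_inv_le (N : ℕ) :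
    ∑ k ∈ range N, (logSqWeight ((k : ℝ) + 1))⁻¹ * (logSqWeight ((N : ℝ) - k))⁻¹ ≤
      16 * (1 + exp 1) * (logSqWeight ((N : ℝ) + 1))⁻¹ := by
  have hreflect : ∑ k ∈ range N, (logSqWeight ((N : ℝ) - k))⁻¹ =
      ∑ k ∈ range N, (logSqWeight ((k : ℝ) + 1))⁻¹ := by
    rw [← sum_range_reflect]
    refine sum_congr rfl fun k hk ↦ ?_
    rw [Nat.cast_sub (by grind), Nat.cast_sub (by grind)]
    push_cast
    ring_nf
  calc ∑ k ∈ range N, (logSqWeight ((k : ℝ) + 1))⁻¹ * (logSqWeight ((N : ℝ) - k))⁻¹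
      ≤ ∑ k ∈ range N, 8 * (logSqWeight ((N : ℝ) + 1))⁻¹ *
          ((logSqWeight ((k : ℝ) + 1))⁻¹ + (logSqWeight ((N : ℝ) - k))⁻¹) := by
        refine sum_le_sum fun k hk ↦ ?_
        have hkN : (k : ℝ) + 1 ≤ N := by exact_mod_cast mem_range.mp hk
        have h := inv_logSqWeight_mul_inv_le (a := (k : ℝ) + 1) (b := (N : ℝ) - k)
          (by positivity) (by linarith)
        rwa [show (k : ℝ) + 1 + (N - k) = N + 1 by ring] at h
    _ = 16 * (logSqWeight ((N : ℝ) + 1))⁻¹ * ∑ k ∈ range N, (logSqWeight ((k : ℝ) + 1))⁻¹ := by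
        rw [← mul_sum, sum_add_distrib, hreflect]
        ring
    _ ≤ 16 * (logSqWeight ((N : ℝ) + 1))⁻¹ * (1 + exp 1) := by
        have := logSqWeight_pos (x := (N : ℝ) + 1) (by positivity)
        gcongr
        exact sum_inv_logSqWeight_le N
    _ = 16 * (1 + exp 1) * (logSqWeight ((N : ℝ) + 1))⁻¹ := by ring

theorem convolution_operator_bound_general
    {H : Type*} [NormedAddCommGroup H] [NormedSpace ℂ H]
    (C₀ C₁ C₂ : ℝ) (hC₀ : 0 < C₀) (hC₁ : 0 < C₁) (hC₂ : 0 < C₂) :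
    ∃ C₃ : ℝ, 0 < C₃ ∧
      ∀ (A W : ℕ → (H →L[ℂ] H)) (B : ℕ → ℕ → (H →L[ℂ] H)) (Φ : ℕ → (H →L[ℂ] H)),
        (∀ N : ℕ, Φ N = A N + ∑ k ∈ Finset.range N, W k * B N k) →
        (∀ N : ℕ, ‖A N‖ ≤ C₀ / (((N : ℝ) + 1) * (Real.log ((N : ℝ) + Real.exp 1)) ^ 2)) →
        (∀ k : ℕ, ‖W k‖ ≤ C₁ / (((k : ℝ) + 1) * (Real.log ((k : ℝ) + 1 + Real.exp 1)) ^ 2)) →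
        (∀ N k : ℕ, k < N →
          ‖B N k‖ ≤ C₂ / (((N : ℝ) - k) * (Real.log ((N : ℝ) - k + Real.exp 1)) ^ 2)) →
        ∀ N : ℕ, ‖Φ N‖ ≤ C₃ / (((N : ℝ) + 1) * (Real.log ((N : ℝ) + Real.exp 1)) ^ 2) := by
  refine ⟨C₀ + C₁ * C₂ * (16 * (1 + exp 1)), by positivity, ?_⟩
  intro A W B Φ hΦ hA hW hB N
  set ρ := ((N : ℝ) + 1) * log ((N : ℝ) + exp 1) ^ 2 with hρ_def
  have hρ : 0 < ρ := by
    have := one_le_log_add_exp_one (Nat.cast_nonneg (α := ℝ) N)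
    positivity
  have hρ_le : ρ ≤ logSqWeight ((N : ℝ) + 1) := by
    rw [hρ_def, logSqWeight, add_assoc (N : ℝ)]
    gcongr
    · exact (one_le_log_add_exp_one N.cast_nonneg).trans' zero_le_one
    · linarith
  have hterm : ∀ k ∈ range N, ‖W k * B N k‖ ≤
      C₁ * C₂ * ((logSqWeight ((k : ℝ) + 1))⁻¹ * (logSqWeight ((N : ℝ) - k))⁻¹) := by
    intro k hk
    have hWB := mul_le_mul (hW k) (hB N k (mem_range.mp hk)) (norm_nonneg _)
      ((norm_nonneg _).trans (hW k))
    refine (norm_mul_le _ _).trans (hWB.trans_eq ?_)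
    simp only [logSqWeight, div_eq_mul_inv]
    ring
  calc ‖Φ N‖ ≤ ‖A N‖ + ∑ k ∈ range N, ‖W k * B N k‖ := by
        rw [hΦ N]
        exact (norm_add_le _ _).trans (add_le_add_right (norm_sum_le _ _) _)
    _ ≤ C₀ / ρ + C₁ * C₂ *
          ∑ k ∈ range N, (logSqWeight ((k : ℝ) + 1))⁻¹ * (logSqWeight ((N : ℝ) - k))⁻¹ := by
        rw [mul_sum]
        exact add_le_add (hA N) (sum_le_sum hterm)
    _ ≤ C₀ / ρ + C₁ * C₂ * (16 * (1 + exp 1) * ρ⁻¹) := by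
        gcongr
        exact (sum_inv_logSqWeight_mul_inv_le N).trans (by gcongr)
    _ = (C₀ + C₁ * C₂ * (16 * (1 + exp 1))) / ρ := by ring

/-- Convolution pattern of Lemma 7: if `Φ_N = A_N + ∑_{k<N} W_k B_N^k` with
`‖A_N‖ ≤ C₀/((N+1)ln²(N+e))`, `‖W_k‖ ≤ C₁/((k+1)ln²(k+1+e))` and
`‖B_N^k‖ ≤ C₂/((N-k)ln²(N-k+e))`, then `‖Φ_N‖ ≤ C₃/((N+1)ln²(N+e))` for a
constant `C₃` depending only on `C₀, C₁, C₂`. -/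
theorem convolution_operator_bound
    {H : Type*} [NormedAddCommGroup H] [NormedSpace ℂ H] [CompleteSpace H]
    (T : ℝ) (hT : 2 < T) (C₀ C₁ C₂ : ℝ) (hC₀ : 0 < C₀) (hC₁ : 0 < C₁) (hC₂ : 0 < C₂) :
    ∃ C₃ : ℝ, 0 < C₃ ∧
      ∀ (A W : ℕ → (H →L[ℂ] H)) (B : ℕ → ℕ → (H →L[ℂ] H)) (Φ : ℕ → (H →L[ℂ] H)),
        (∀ N : ℕ, Φ N = A N + ∑ k ∈ Finset.range N, W k * B N k) →
        (∀ N : ℕ, ‖A N‖ ≤ C₀ / (((N : ℝ) + 1) * (Real.log ((N : ℝ) + Real.exp 1)) ^ 2)) →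
        (∀ k : ℕ, ‖W k‖ ≤ C₁ / (((k : ℝ) + 1) * (Real.log ((k : ℝ) + 1 + Real.exp 1)) ^ 2)) →
        (∀ N k : ℕ, k < N →
          ‖B N k‖ ≤ C₂ / (((N : ℝ) - k) * (Real.log ((N : ℝ) - k + Real.exp 1)) ^ 2)) →
        ∀ N : ℕ, ‖Φ N‖ ≤ C₃ / (((N : ℝ) + 1) * (Real.log ((N : ℝ) + Real.exp 1)) ^ 2) :=
  convolution_operator_bound_general C₀ C₁ C₂ hC₀ hC₁ hC₂
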